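/- The supremum over dyadic cubes of the truncated chip norm is attained: for f ∈ L^p(R^d), f ≠ 0, and fixed j ∈ N, the quantity sup_{τ dyadic} ‖f·1_τ·1_{{ξ : |f(ξ)| < 2^j |τ|^{-1/p}‖f‖_p}}‖_{L^p(R^d)}, if nonzero, is attained by some dyadic cube τ*. -/

import Mathlib

open MeasureTheory
open scoped ENNReal

/-- The dyadic cube of side length `2^{-k}` with corner `m · 2^{-k}`. -/
def dyadicCube (d : ℕ) (k : ℤ) (m : Fin d → ℤ) : Set (EuclideanSpace ℝ (Fin d)) :=
  {ξ | ∀ i, (m i : ℝ) * (2 : ℝ) ^ (-k : ℤ) ≤ ξ i ∧ ξ i ≤ ((m i : ℝ) + 1) * (2 : ℝ) ^ (-k : ℤ)}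

-- The truncated chip of `f` on the dyadic cube `(k, m)`: `f·1_τ·1_{|f| < 2^j |τ|^{-1/p} ‖f‖_p}`,
-- where `|τ|^{-1/p} = 2^{kd/p}`.
open Classical in
noncomputable def truncChip (d : ℕ) (p : ℝ) (f : EuclideanSpace ℝ (Fin d) → ℂ)
    (j : ℕ) (k : ℤ) (m : Fin d → ℤ) : EuclideanSpace ℝ (Fin d) → ℂ :=
  fun ξ => if ξ ∈ dyadicCube d k m ∧
      ‖f ξ‖ < 2 ^ j * (2 : ℝ) ^ ((k : ℝ) * d / p) *
        (eLpNorm f (ENNReal.ofReal p) volume).toReal then f ξ else 0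

/-!
Let `ν` be the finite measure with density `|f|^p`; the `p`-th power of a truncated chip norm is
the `ν`-mass of the cube cut down to `{|f| < level}`. These masses tend to `0` along the cofinite
filter on (scale, position): for coarse cubes the level `2^j 2^{kd/p} ‖f‖_p` tends to `0` and
`ν {|f| < δ} → ν {f = 0} = 0`; for fine cubes the Lebesgue measure tends to `0` uniformly and `ν` is
absolutely continuous; at a fixed scale the cubes overlap only in null sets, so only finitely many
of them have `ν`-mass `≥ ε`. A function tending to `0` cofinitely that takes a positive value
attains its maximum.
-/

open Filter Topology

section Cofinite

variable {α β γ : Type*}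

theorem Filter.Tendsto.cofinite_prod {F : α × β → γ} {l : Filter γ}
    (hfst : Tendsto F (comap Prod.fst cofinite) l)
    (hrow : ∀ a, Tendsto (fun b => F (a, b)) cofinite l) :
    Tendsto F cofinite l := by
  intro U hU
  obtain ⟨t, ht, htU⟩ := hfst hU
  have hsub : (F ⁻¹' U)ᶜ ⊆ ⋃ a ∈ tᶜ, ({a} : Set α) ×ˢ ((fun b => F (a, b)) ⁻¹' U)ᶜ := by
    rintro ⟨a, b⟩ hab
    have ha : a ∉ t := fun ha => hab (htU ha)
    exact Set.mem_biUnion ha ⟨rfl, hab⟩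
  exact ((mem_cofinite.1 ht).biUnion fun a _ => (Set.finite_singleton a).prod
    (mem_cofinite.1 (hrow a hU))).subset hsub

theorem Filter.Tendsto.exists_forall_ge_of_cofinite [LinearOrder β] [TopologicalSpace β]
    [ClosedIciTopology β] {f : α → β} {x : β} (hf : Tendsto f cofinite (𝓝 x)) {a : α}
    (ha : x < f a) : ∃ a₀, ∀ b, f b ≤ f a₀ := by
  have hfin : {b | f a ≤ f b}.Finite := by
    simpa only [eventually_cofinite, not_lt] using hf.eventually (eventually_lt_nhds ha)
  obtain ⟨a₀, ha₀, hmax⟩ := Set.exists_max_image _ f hfin ⟨a, le_rfl⟩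
  refine ⟨a₀, fun b => ?_⟩
  rcases le_total (f a) (f b) with hb | hb
  · exact hmax b hb
  · exact hb.trans ha₀

end Cofinite

section WithDensity

variable {α E : Type*} [MeasurableSpace α] {μ : Measure α} [NormedAddCommGroup E]

theorem tendsto_measure_cofinite_zero_of_pairwise_aedisjoint {ι : Type*} [IsFiniteMeasure μ]
    {s : ι → Set α} (hs : ∀ i, NullMeasurableSet (s i) μ)
    (hd : Pairwise (Function.onFun (AEDisjoint μ) s)) :
    Tendsto (μ ∘ s) cofinite (𝓝 0) :=
  ENNReal.tendsto_cofinite_zero_of_tsum_ne_top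
    ((tsum_meas_le_meas_iUnion_of_disjoint₀ μ hs hd).trans_lt (measure_lt_top _ _)).ne

theorem eLpNorm_indicator_eq_withDensity_rpow [SFinite μ] {f : α → E} {p : ℝ≥0∞} (hp0 : p ≠ 0)
    (hp : p ≠ ∞) {s : Set α} (hs : NullMeasurableSet s μ) :
    eLpNorm (s.indicator f) p μ =
      μ.withDensity (fun x => ‖f x‖ₑ ^ p.toReal) s ^ (1 / p.toReal) := by
  have hp_pos : 0 < p.toReal := ENNReal.toReal_pos hp0 hp
  rw [eLpNorm_eq_lintegral_rpow_enorm_toReal hp0 hp, withDensity_apply',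
    ← lintegral_indicator₀ hs]
  congr 1
  refine lintegral_congr fun x => ?_
  by_cases hx : x ∈ s <;> simp [hx, hp_pos]

theorem tendsto_withDensity_enorm_rpow_setOf_norm_lt [SFinite μ] {f : α → E} {q : ℝ}
    (hq : 0 < q) (hf : AEStronglyMeasurable f μ) (hfin : ∫⁻ x, ‖f x‖ₑ ^ q ∂μ ≠ ∞) :
    Tendsto (fun δ : ℝ => μ.withDensity (fun x => ‖f x‖ₑ ^ q) {x | ‖f x‖ < δ}) (𝓝 0) (𝓝 0) := by
  set ν := μ.withDensity fun x => ‖f x‖ₑ ^ q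
  have : IsFiniteMeasure ν := isFiniteMeasure_withDensity hfin
  have hν : ν ≪ μ := withDensity_absolutelyContinuous _ _
  have hfν : AEStronglyMeasurable f ν := hf.mono_ac hν
  have hzero : ν {x | f x = 0} = 0 := by
    refine (withDensity_apply_eq_zero' (hf.enorm.pow_const q)).2 ?_
    convert measure_empty (μ := μ)
    ext x
    simp +contextual [hq]
  have hpos : Tendsto (fun δ : ℝ => ν {x | ‖f x‖ < δ}) (𝓝[>] 0) (𝓝 0) := by
    have hinter : ⋂ δ > (0 : ℝ), {x | ‖f x‖ < δ} = {x | f x = 0} := by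
      ext x
      simp only [Set.mem_iInter]
      exact ⟨fun h => norm_le_zero_iff.1 (le_of_forall_pos_lt_add fun ε hε => by
        simpa using h ε hε), fun h δ hδ => show ‖f x‖ < δ by rwa [h, norm_zero]⟩
    have h := tendsto_measure_biInter_gt (μ := ν) (s := fun δ : ℝ => {x | ‖f x‖ < δ}) (a := 0)
      (fun δ _ => nullMeasurableSet_lt hfν.norm.aemeasurable aemeasurable_const)
      (fun _ _ _ hδ _ hx => lt_of_lt_of_le hx hδ)
      ⟨1, one_pos, measure_ne_top ν _⟩
    rwa [hinter, hzero] at h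
  rw [← nhdsLE_sup_nhdsGT]
  refine tendsto_sup.2 ⟨tendsto_const_nhds.congr' ?_, hpos⟩
  filter_upwards [self_mem_nhdsWithin] with δ (hδ : δ ≤ 0)
  refine (measure_mono_null (fun x (hx : ‖f x‖ < δ) => ?_) measure_empty).symm
  exact (norm_nonneg _).not_gt (hx.trans_le hδ)

end WithDensity

theorem EuclideanSpace.volume_setOf_apply_eq {ι : Type*} [Fintype ι] (i : ι) (c : ℝ) :
    volume {ξ : EuclideanSpace ℝ ι | ξ i = c} = 0 := by
  change volume ((MeasurableEquiv.toLp 2 (ι → ℝ)).symm ⁻¹' {x : ι → ℝ | x i = c}) = 0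
  rw [(EuclideanSpace.volume_preserving_symm_measurableEquiv_toLp ι).measure_preimage_equiv]
  exact Measure.pi_hyperplane (fun _ : ι => (volume : Measure ℝ)) i c

section DyadicCube

variable {d : ℕ}

theorem dyadicCube_eq_preimage (k : ℤ) (m : Fin d → ℤ) :
    dyadicCube d k m = (MeasurableEquiv.toLp 2 (Fin d → ℝ)).symm ⁻¹'
      Set.univ.pi fun i => Set.Icc ((m i : ℝ) * 2 ^ (-k)) ((m i + 1) * 2 ^ (-k)) := by
  ext ξ
  simp only [Set.mem_preimage, Set.mem_univ_pi, Set.mem_Icc]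
  rfl

theorem measurableSet_dyadicCube (k : ℤ) (m : Fin d → ℤ) :
    MeasurableSet (dyadicCube d k m) := by
  rw [dyadicCube_eq_preimage]
  exact (MeasurableEquiv.toLp 2 (Fin d → ℝ)).symm.measurable
    (MeasurableSet.univ_pi fun _ => measurableSet_Icc)

theorem volume_dyadicCube (k : ℤ) (m : Fin d → ℤ) :
    volume (dyadicCube d k m) = ENNReal.ofReal (2 ^ (-k)) ^ d := by
  rw [dyadicCube_eq_preimage,
    (EuclideanSpace.volume_preserving_symm_measurableEquiv_toLp (Fin d)).measure_preimage_equiv,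
    volume_pi_pi]
  simp [Real.volume_Icc, add_mul]

theorem aedisjoint_dyadicCube {k : ℤ} {m m' : Fin d → ℤ} (h : m ≠ m') :
    AEDisjoint volume (dyadicCube d k m) (dyadicCube d k m') := by
  obtain ⟨i, hne⟩ := Function.ne_iff.1 h
  wlog hi : m i < m' i generalizing m m'
  · exact (this h.symm hne.symm (hne.lt_or_gt.resolve_left hi)).symm
  refine measure_mono_null (fun ξ hξ => ?_)
    (EuclideanSpace.volume_setOf_apply_eq i (m' i * 2 ^ (-k)))
  have hmi : (m i + 1 : ℝ) ≤ m' i := by exact_mod_cast hi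
  have hupper := (hξ.1 i).2
  have hlower := (hξ.2 i).1
  show ξ i = _
  nlinarith [zpow_pos (two_pos (α := ℝ)) (-k)]

theorem tendsto_volume_dyadicCube (hd : d ≠ 0) :
    Tendsto (fun km : ℤ × (Fin d → ℤ) => volume (dyadicCube d km.1 km.2))
      (comap Prod.fst atTop) (𝓝 0) := by
  have hpow : Tendsto (fun k : ℤ => (2 : ℝ) ^ (-k)) atTop (𝓝 0) := by
    refine ((tendsto_rpow_atBot_of_base_gt_one 2 one_lt_two).comp
      (tendsto_intCast_atBot_iff.2 tendsto_neg_atTop_atBot)).congr fun k => ?_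
    rw [Function.comp_apply, Real.rpow_intCast]
  have := ENNReal.Tendsto.pow (n := d) (ENNReal.tendsto_ofReal hpow)
  rw [ENNReal.ofReal_zero, zero_pow hd] at this
  simp only [volume_dyadicCube]
  exact this.comp tendsto_comap

end DyadicCube

section TruncChip

variable {d : ℕ} {p : ℝ} {f : EuclideanSpace ℝ (Fin d) → ℂ} {j : ℕ}

noncomputable def truncChipLevel (d : ℕ) (p : ℝ) (f : EuclideanSpace ℝ (Fin d) → ℂ) (j : ℕ)
    (k : ℤ) : ℝ :=
  2 ^ j * (2 : ℝ) ^ ((k : ℝ) * d / p) * (eLpNorm f (ENNReal.ofReal p) volume).toReal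

def truncChipSet (d : ℕ) (p : ℝ) (f : EuclideanSpace ℝ (Fin d) → ℂ) (j : ℕ) (k : ℤ)
    (m : Fin d → ℤ) : Set (EuclideanSpace ℝ (Fin d)) :=
  dyadicCube d k m ∩ {ξ | ‖f ξ‖ < truncChipLevel d p f j k}

theorem truncChip_eq_indicator (k : ℤ) (m : Fin d → ℤ) :
    truncChip d p f j k m = (truncChipSet d p f j k m).indicator f := by
  ext ξ
  by_cases h : ξ ∈ truncChipSet d p f j k m
  · rw [Set.indicator_of_mem h]
    exact if_pos h
  · rw [Set.indicator_of_notMem h]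
    exact if_neg h

theorem nullMeasurableSet_truncChipSet (hf : AEStronglyMeasurable f volume) (k : ℤ)
    (m : Fin d → ℤ) : NullMeasurableSet (truncChipSet d p f j k m) volume :=
  (measurableSet_dyadicCube k m).nullMeasurableSet.inter
    (nullMeasurableSet_lt hf.norm.aemeasurable aemeasurable_const)

theorem eLpNorm_truncChip (hp : 0 < p) (hf : AEStronglyMeasurable f volume) (k : ℤ)
    (m : Fin d → ℤ) :
    eLpNorm (truncChip d p f j k m) (ENNReal.ofReal p) volume =
      volume.withDensity (fun ξ => ‖f ξ‖ₑ ^ p) (truncChipSet d p f j k m) ^ (1 / p) := by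
  rw [truncChip_eq_indicator, eLpNorm_indicator_eq_withDensity_rpow (by simpa using hp)
    ENNReal.ofReal_ne_top (nullMeasurableSet_truncChipSet hf k m), ENNReal.toReal_ofReal hp.le]

theorem tendsto_truncChipLevel_atBot (hd : d ≠ 0) (hp : 0 < p) :
    Tendsto (truncChipLevel d p f j) atBot (𝓝 0) := by
  have hexp : Tendsto (fun k : ℤ => (k : ℝ) * d / p) atBot atBot :=
    ((tendsto_intCast_atBot_iff.2 tendsto_id).atBot_mul_const (by positivity)).atBot_div_const hp
  have h := (((tendsto_rpow_atBot_of_base_gt_one 2 one_lt_two).comp hexp).const_mul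
    (2 ^ j : ℝ)).mul_const (eLpNorm f (ENNReal.ofReal p) volume).toReal
  rwa [mul_zero, zero_mul] at h

theorem tendsto_withDensity_truncChipSet (hd : d ≠ 0) (hp : 0 < p)
    (hf : AEStronglyMeasurable f volume) (hfin : ∫⁻ ξ, ‖f ξ‖ₑ ^ p ≠ ∞) :
    Tendsto (fun km : ℤ × (Fin d → ℤ) =>
      volume.withDensity (fun ξ => ‖f ξ‖ₑ ^ p) (truncChipSet d p f j km.1 km.2))
      cofinite (𝓝 0) := by
  set ν := volume.withDensity fun ξ => ‖f ξ‖ₑ ^ p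
  have : IsFiniteMeasure ν := isFiniteMeasure_withDensity hfin
  have hν : ν ≪ volume := withDensity_absolutelyContinuous _ _
  refine Tendsto.cofinite_prod ?_ fun k => ?_
  · rw [Int.cofinite_eq, comap_sup, tendsto_sup]
    constructor
    · refine tendsto_of_tendsto_of_tendsto_of_le_of_le tendsto_const_nhds
        (((tendsto_withDensity_enorm_rpow_setOf_norm_lt hp hf hfin).comp
          (tendsto_truncChipLevel_atBot hd hp)).comp tendsto_comap) (fun _ => zero_le)
        fun km => measure_mono Set.inter_subset_right
    · refine tendsto_of_tendsto_of_tendsto_of_le_of_le tendsto_const_nhds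
        (tendsto_setLIntegral_zero hfin (tendsto_volume_dyadicCube hd)) (fun _ => zero_le)
        fun km => ?_
      rw [← withDensity_apply']
      exact measure_mono Set.inter_subset_left
  · exact tendsto_measure_cofinite_zero_of_pairwise_aedisjoint
      (fun m => (nullMeasurableSet_truncChipSet hf k m).mono_ac hν)
      fun m m' h => hν ((aedisjoint_dyadicCube h).mono Set.inter_subset_left Set.inter_subset_left)

theorem tendsto_eLpNorm_truncChip (hd : d ≠ 0) (hp : 0 < p)
    (hf : MemLp f (ENNReal.ofReal p) volume) :
    Tendsto (fun km : ℤ × (Fin d → ℤ) =>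
      eLpNorm (truncChip d p f j km.1 km.2) (ENNReal.ofReal p) volume) cofinite (𝓝 0) := by
  have hfin : ∫⁻ ξ, ‖f ξ‖ₑ ^ p ≠ ∞ := by
    simpa [ENNReal.toReal_ofReal hp.le] using (lintegral_rpow_enorm_lt_top_of_eLpNorm_lt_top
      (by simpa using hp) ENNReal.ofReal_ne_top hf.eLpNorm_lt_top).ne
  simp_rw [eLpNorm_truncChip hp hf.1]
  simpa [Function.comp_def, hp] using ((ENNReal.continuous_rpow_const (y := 1 / p)).tendsto 0).comp
    (tendsto_withDensity_truncChipSet (j := j) hd hp hf.1 hfin)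

end TruncChip

theorem trunc_chip_sup_attained
    (d : ℕ) (hd : 1 ≤ d) (p : ℝ) (hp : 1 ≤ p) (j : ℕ)
    (f : EuclideanSpace ℝ (Fin d) → ℂ)
    (hf : MemLp f (ENNReal.ofReal p) volume)
    (hpos : ∃ (k : ℤ) (m : Fin d → ℤ),
      0 < eLpNorm (truncChip d p f j k m) (ENNReal.ofReal p) volume) :
    ∃ (k' : ℤ) (m' : Fin d → ℤ), ∀ (k : ℤ) (m : Fin d → ℤ),
      eLpNorm (truncChip d p f j k m) (ENNReal.ofReal p) volume ≤
        eLpNorm (truncChip d p f j k' m') (ENNReal.ofReal p) volume := by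
  obtain ⟨k, m, hkm⟩ := hpos
  obtain ⟨⟨k', m'⟩, hmax⟩ := (tendsto_eLpNorm_truncChip (j := j) (by omega) (by linarith)
    hf).exists_forall_ge_of_cofinite (a := (k, m)) hkm
  exact ⟨k', m', fun k m => hmax (k, m)⟩
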